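/- There exists an admissible flow H for the extended problem P̄b(μ∞, μ∞) with 𝒜̄(H) = 0; consequently 𝒜̄(μ∞, μ∞) = 0. -/

import Mathlib

open MeasureTheory ENNReal Set Function

noncomputable section

namespace BrenierExt

/-- The unit interval `[0,1] ⊆ ℝ`. -/
abbrev UI := Set.Icc (0:ℝ) 1

/-- The path space `𝒞 = C⁰([0,1];ℝ)` (the relevant flows are concentrated on paths with
values in `[0,1]`, which is enforced by the incompressibility constraint). -/
abbrev IPath := C(UI, ℝ)

instance : MeasurableSpace IPath := borel _
instance : BorelSpace IPath := ⟨rfl⟩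

/-- The 2-energy `∫₀¹ |ω̇|²` of a path, as a supremum over partitions; finite iff the path
is absolutely continuous with square-integrable derivative. -/
def energy (ω : IPath) : ℝ≥0∞ :=
  ⨆ (n : ℕ) (t : Fin (n + 1) → UI) (_ : Monotone t),
    ∑ i : Fin n,
      ENNReal.ofReal ((ω (t i.succ) - ω (t i.castSucc)) ^ 2) /
        ENNReal.ofReal ((t i.succ : ℝ) - (t i.castSucc : ℝ))

/-- The action `A(ω) = (1/2)∫₀¹ |ω̇|²` (`+∞` if not `AC²`). -/
def action (ω : IPath) : ℝ≥0∞ := energy ω / 2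

/-- Lebesgue measure on `[0,1]`. -/
def lebUI : Measure ℝ := volume.restrict (Icc (0:ℝ) 1)

/-- The measure `μ∞` on `[0,1]²`: image of Lebesgue by `x ↦ (x, x/2)` and
`x ↦ (x, 1/2 + x/2)`, with weight `1/2` each. -/
def muInf : Measure (ℝ × ℝ) :=
  (2 : ℝ≥0∞)⁻¹ • (lebUI.map (fun x => (x, x / 2)) + lebUI.map (fun x => (x, 1/2 + x / 2)))

/-- The measures `μ_n` on `[0,1]²`. -/
def muN (n : ℕ) : Measure (ℝ × ℝ) :=
  ∑ i ∈ Finset.range n,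
    ((volume.restrict (Icc (0:ℝ) (1 / (2 * n)))).map
        (fun x => ((i : ℝ) / n + x, (i : ℝ) / (2 * n) + x)) +
      (volume.restrict (Icc (0:ℝ) (1 / (2 * n)))).map
        (fun x => ((2 * i + 1 : ℝ) / (2 * n) + x, 1/2 + 1 / (2 * n) + x)))

/-- Admissibility of a flow `H` on `[0,1] × 𝒞` for the extended problem `P̄b(μ,ν)`:
`(π,e₀)♯H = μ`, `(π,e₁)♯H = ν` and `(e_t)♯H` is Lebesgue on `[0,1]` for all `t`. -/
def eAdmissible (μ ν : Measure (ℝ × ℝ)) (H : Measure (ℝ × IPath)) : Prop :=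
  IsProbabilityMeasure H ∧
  H.map (fun p => (p.1, p.2 ⟨0, by norm_num⟩)) = μ ∧
  H.map (fun p => (p.1, p.2 ⟨1, by norm_num⟩)) = ν ∧
  ∀ t : UI, H.map (fun p => p.2 t) = lebUI

/-- The action `𝒜̄(H) = ∫ A(ω) dH(a,ω)` of an extended flow. -/
def eAction (H : Measure (ℝ × IPath)) : ℝ≥0∞ := ∫⁻ p, action p.2 ∂H

/-- The optimal action `𝒜̄(μ,ν)` of the extended problem. -/
def eOpt (μ ν : Measure (ℝ × ℝ)) : ℝ≥0∞ :=
  ⨅ (H : Measure (ℝ × IPath)) (_ : eAdmissible μ ν H), eAction H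

/-! ### Auxiliary lemmas -/

/-- The map sending `(a, y)` to `(a, constant path at y)`. -/
def constFlow : ℝ × ℝ → ℝ × IPath := fun q => (q.1, ContinuousMap.const UI q.2)

lemma measurable_constFlow : Measurable constFlow := by
  have : Continuous constFlow :=
    continuous_fst.prodMk (ContinuousMap.continuous_const'.comp continuous_snd)
  exact this.measurable

lemma measurable_eval (t : UI) : Measurable (fun p : ℝ × IPath => p.2 t) := by
  have : Continuous (fun p : ℝ × IPath => p.2 t) :=
    (continuous_eval_const t).comp continuous_snd
  exact this.measurable

lemma measurable_pair_eval (t : UI) :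
    Measurable (fun p : ℝ × IPath => (p.1, p.2 t)) :=
  measurable_fst.prodMk (measurable_eval t)

lemma map_half : lebUI.map (fun x => x / 2) = (2:ℝ≥0∞) • volume.restrict (Icc (0:ℝ) 2⁻¹) := by
  have hm : Measurable (fun x : ℝ => x / 2) := by fun_prop
  have hpre : (fun x : ℝ => x / 2) ⁻¹' Icc (0:ℝ) 2⁻¹ = Icc 0 1 := by
    ext x
    simp only [mem_preimage, mem_Icc]
    constructor <;> intro h <;> constructor <;> nlinarith [h.1, h.2]
  have h1 : (volume.map (fun x : ℝ => x / 2)) = (2:ℝ≥0∞) • volume := by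
    have he : (fun x : ℝ => x / 2) = (fun x : ℝ => (2:ℝ)⁻¹ * x) := by ext x; ring
    rw [he, Real.map_volume_mul_left (by norm_num : (2:ℝ)⁻¹ ≠ 0)]
    norm_num
  calc lebUI.map (fun x => x / 2)
      = ((volume.restrict ((fun x : ℝ => x / 2) ⁻¹' Icc (0:ℝ) 2⁻¹)).map (fun x => x / 2)) := by
        rw [hpre]; rfl
    _ = (volume.map (fun x : ℝ => x / 2)).restrict (Icc (0:ℝ) 2⁻¹) :=
        (Measure.restrict_map hm measurableSet_Icc).symm
    _ = (2:ℝ≥0∞) • volume.restrict (Icc (0:ℝ) 2⁻¹) := by rw [h1, Measure.restrict_smul]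

lemma map_half2 : lebUI.map (fun x => 1/2 + x / 2) = (2:ℝ≥0∞) • volume.restrict (Icc (2⁻¹:ℝ) 1) := by
  have hm : Measurable (fun x : ℝ => 1/2 + x / 2) := by fun_prop
  have hpre : (fun x : ℝ => 1/2 + x / 2) ⁻¹' Icc (2⁻¹:ℝ) 1 = Icc 0 1 := by
    ext x
    simp only [mem_preimage, mem_Icc]
    constructor <;> intro h <;> constructor <;> nlinarith [h.1, h.2]
  have h1 : (volume.map (fun x : ℝ => 1/2 + x / 2)) = (2:ℝ≥0∞) • volume := by
    have he : (fun x : ℝ => 1/2 + x / 2) = (fun y : ℝ => (1/2 : ℝ) + y) ∘ (fun x : ℝ => x / 2) := by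
      ext x; simp
    rw [he, ← Measure.map_map (by fun_prop) (by fun_prop)]
    have h2 : (volume.map (fun x : ℝ => x / 2)) = (2:ℝ≥0∞) • volume := by
      have he2 : (fun x : ℝ => x / 2) = (fun x : ℝ => (2:ℝ)⁻¹ * x) := by ext x; ring
      rw [he2, Real.map_volume_mul_left (by norm_num : (2:ℝ)⁻¹ ≠ 0)]
      norm_num
    rw [h2, Measure.map_smul, map_add_left_eq_self volume (1/2 : ℝ)]
  calc lebUI.map (fun x => 1/2 + x / 2)
      = ((volume.restrict ((fun x : ℝ => 1/2 + x / 2) ⁻¹' Icc (2⁻¹:ℝ) 1)).map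
          (fun x => 1/2 + x / 2)) := by rw [hpre]; rfl
    _ = (volume.map (fun x : ℝ => 1/2 + x / 2)).restrict (Icc (2⁻¹:ℝ) 1) :=
        (Measure.restrict_map hm measurableSet_Icc).symm
    _ = (2:ℝ≥0∞) • volume.restrict (Icc (2⁻¹:ℝ) 1) := by rw [h1, Measure.restrict_smul]

lemma restrict_split :
    volume.restrict (Icc (0:ℝ) 2⁻¹) + volume.restrict (Icc (2⁻¹:ℝ) 1) = lebUI := by
  rw [← restrict_Ico_eq_restrict_Icc (a := (0:ℝ)) (b := 2⁻¹),
    ← Measure.restrict_union ?_ measurableSet_Icc,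
    Set.Ico_union_Icc_eq_Icc (by norm_num) (by norm_num)]
  · rfl
  · rw [Set.disjoint_left]
    rintro x ⟨-, h1⟩ ⟨h2, -⟩
    exact absurd h2 (not_le.2 h1)

/-- The second marginal of `μ∞` is Lebesgue measure on `[0,1]`. -/
lemma snd_muInf : muInf.map Prod.snd = lebUI := by
  have hl : Measurable (fun x : ℝ => (x, x / 2)) := by fun_prop
  have hr : Measurable (fun x : ℝ => (x, 1/2 + x / 2)) := by fun_prop
  rw [muInf, Measure.map_smul, Measure.map_add _ _ measurable_snd,
    Measure.map_map measurable_snd hl, Measure.map_map measurable_snd hr]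
  have h1 : (Prod.snd ∘ fun x : ℝ => (x, x / 2)) = fun x : ℝ => x / 2 := rfl
  have h2 : (Prod.snd ∘ fun x : ℝ => (x, 1/2 + x / 2)) = fun x : ℝ => 1/2 + x / 2 := rfl
  rw [h1, h2, map_half, map_half2, ← smul_add, smul_smul,
    ENNReal.inv_mul_cancel two_ne_zero ENNReal.ofNat_ne_top, one_smul, restrict_split]

lemma isProbabilityMeasure_muInf : IsProbabilityMeasure muInf := by
  constructor
  have hl : Measurable (fun x : ℝ => (x, x / 2)) := by fun_prop
  have hr : Measurable (fun x : ℝ => (x, 1/2 + x / 2)) := by fun_prop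
  have hleb : lebUI univ = 1 := by
    simp [lebUI, Real.volume_Icc]
  have e1 : (lebUI.map (fun x : ℝ => (x, x / 2))) univ = 1 := by
    rw [Measure.map_apply hl MeasurableSet.univ, preimage_univ, hleb]
  have e2 : (lebUI.map (fun x : ℝ => (x, 1/2 + x / 2))) univ = 1 := by
    rw [Measure.map_apply hr MeasurableSet.univ, preimage_univ, hleb]
  rw [muInf, Measure.smul_apply, Measure.add_apply, e1, e2, smul_eq_mul,
    one_add_one_eq_two, ENNReal.inv_mul_cancel two_ne_zero ENNReal.ofNat_ne_top]

/-- Constant paths have zero energy and zero action. -/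
lemma action_eq_zero_of_const {ω : IPath} (hω : ∀ s t : UI, ω s = ω t) : action ω = 0 := by
  have he : energy ω = 0 := by
    rw [energy]
    simp only [iSup_eq_zero]
    intro n t _
    refine Finset.sum_eq_zero fun i _ => ?_
    rw [hω (t i.succ) (t i.castSucc), sub_self]
    simp
  rw [action, he, ENNReal.zero_div]

/-- The set of constant paths is closed, hence measurable. -/
lemma measurableSet_constSet :
    MeasurableSet {ω : IPath | ∀ s t : UI, ω s = ω t} := by
  have : IsClosed {ω : IPath | ∀ s t : UI, ω s = ω t} := by
    have he : {ω : IPath | ∀ s t : UI, ω s = ω t} =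
        ⋂ (s : UI) (t : UI), {ω : IPath | ω s = ω t} := by
      ext ω; simp only [mem_setOf_eq, mem_iInter]
    rw [he]
    exact isClosed_iInter fun s => isClosed_iInter fun t =>
      isClosed_eq (continuous_eval_const s) (continuous_eval_const t)
  exact this.measurableSet

/-- Section 2. There is an admissible flow for `P̄b(μ∞, μ∞)` of zero
action; consequently `𝒜̄(μ∞, μ∞) = 0`. -/
theorem eOpt_muInf_muInf :
    (∃ H : Measure (ℝ × IPath), eAdmissible muInf muInf H ∧ eAction H = 0) ∧
    eOpt muInf muInf = 0 := by
  set H : Measure (ℝ × IPath) := muInf.map constFlow with hH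
  have hmu : IsProbabilityMeasure muInf := isProbabilityMeasure_muInf
  -- the marginals (π, e_t)♯H
  have hmarg : ∀ t : UI, H.map (fun p => (p.1, p.2 t)) = muInf := by
    intro t
    rw [hH, Measure.map_map (measurable_pair_eval t) measurable_constFlow]
    have : ((fun p : ℝ × IPath => (p.1, p.2 t)) ∘ constFlow) = id := by
      ext q <;> rfl
    rw [this, Measure.map_id]
  -- incompressibility
  have hincomp : ∀ t : UI, H.map (fun p => p.2 t) = lebUI := by
    intro t
    rw [hH, Measure.map_map (measurable_eval t) measurable_constFlow]
    have : ((fun p : ℝ × IPath => p.2 t) ∘ constFlow) = Prod.snd := rfl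
    rw [this, snd_muInf]
  have hadm : eAdmissible muInf muInf H := by
    refine ⟨?_, hmarg _, hmarg _, hincomp⟩
    exact Measure.isProbabilityMeasure_map measurable_constFlow.aemeasurable
  -- zero action
  have hact : eAction H = 0 := by
    have hset : MeasurableSet {p : ℝ × IPath | ∀ s t : UI, p.2 s = p.2 t} :=
      measurable_snd measurableSet_constSet
    have hae : ∀ᵐ p ∂H, ∀ s t : UI, p.2 s = p.2 t := by
      rw [hH, MeasureTheory.ae_map_iff measurable_constFlow.aemeasurable hset]
      exact Filter.Eventually.of_forall fun q s t => rfl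
    have : ∀ᵐ p ∂H, action p.2 = (0 : ℝ≥0∞) :=
      hae.mono fun p hp => action_eq_zero_of_const hp
    rw [eAction, lintegral_congr_ae this, lintegral_zero]
  refine ⟨⟨H, hadm, hact⟩, ?_⟩
  exact le_antisymm ((iInf₂_le H hadm).trans_eq hact) zero_le

end BrenierExt
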